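/- In the bar-type complex C_•(L) for the algebra B = Ext*(O ⊕ L, O ⊕ L), the element η⊗ξ⊗θ is a cycle in internal degree 2 and homological degree 3 which is not a boundary, and it differs from the cycle η⊗θ⊗ξ_L + ξ_L⊗η⊗θ by the boundary of η⊗θ⊗η⊗θ. -/

import Mathlib

/-
A word of length four merges to `η ⊗ ξ ⊗ θ` only by splitting `ξ = θ·η`, and to `η ⊗ θ ⊗ ξ_L`
only by splitting `ξ_L = η·θ`; in both cases the word is `η ⊗ θ ⊗ η ⊗ θ`, whose boundary is
`ηξθ - ηθξ_L - ξ_Lηθ`. So if `d b = η ⊗ ξ ⊗ θ`, the coefficient of `η ⊗ θ ⊗ η ⊗ θ` in `b`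
is `1` when read off at `η ⊗ ξ ⊗ θ` and `0` when read off at `η ⊗ θ ⊗ ξ_L`.
-/

/-- The four basis elements of `B₊ = ⟨θ, η, ξ, ξ_L⟩`. -/
inductive BLetter : Type
  | th   -- θ  (degree 0)
  | et   -- η  (degree 1)
  | xi   -- ξ  (degree 1)
  | xiL  -- ξ_L (degree 1)
deriving DecidableEq

instance : Fintype BLetter where
  elems := {.th, .et, .xi, .xiL}
  complete x := by cases x <;> simp

/-- Left corner (`true` = `L`, `false` = `𝒪`): θ ∈ (𝒪,L), η ∈ (L,𝒪), ξ ∈ (𝒪,𝒪), ξ_L ∈ (L,L). -/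
def lcorn : BLetter → Bool
  | .th => false | .et => true | .xi => false | .xiL => true

/-- Right corner. -/
def rcorn : BLetter → Bool
  | .th => true | .et => false | .xi => false | .xiL => true

/-- The internal degree of a basis letter: θ has degree 0; η, ξ, ξ_L degree 1. -/
def ldeg : BLetter → ℕ
  | .th => 0 | _ => 1

/-- Products of the generators in `B`: `η·θ = ξ_L`, `θ·η = ξ`, all other
products of the four generators are zero. -/
def mulLetter : BLetter → BLetter → Option BLetter
  | .et, .th => some .xiL
  | .th, .et => some .xi
  | _, _ => none

/-- A word `w` is an admissible basis tensor of
`id_L ⊗_R B₊^{⊗_R n} ⊗_R id_L`: both end corners are `L` and adjacent corners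
match. -/
def wordAdm (n : ℕ) (w : Fin n → BLetter) : Prop :=
  (∀ i : Fin n, (i : ℕ) = 0 → lcorn (w i) = true) ∧
  (∀ i : Fin n, (i : ℕ) = n - 1 → rcorn (w i) = true) ∧
  (∀ i j : Fin n, (j : ℕ) = (i : ℕ) + 1 → rcorn (w i) = lcorn (w j))

instance (n : ℕ) (w : Fin n → BLetter) : Decidable (wordAdm n w) := by
  unfold wordAdm; infer_instance

/-- The internal degree of a word. -/
def wordDeg {n : ℕ} (w : Fin n → BLetter) : ℕ := ∑ i, ldeg (w i)

/-- `n`-chains of the bar-type complex `C_•(L)`: formal `k`-linear combinations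
of words of length `n` (supported on admissible words). -/
abbrev BarChain (k : Type*) (n : ℕ) : Type _ := (Fin n → BLetter) → k

/-- The word obtained from `w` by merging the letters at positions `i`, `i+1`
(if their product is nonzero). -/
def mergeWord {n : ℕ} (w : Fin (n + 1) → BLetter) (i : ℕ) (h : i + 1 < n + 1) :
    Option (Fin n → BLetter) :=
  (mulLetter (w ⟨i, by omega⟩) (w ⟨i + 1, h⟩)).map (fun ℓ j =>
    if (j : ℕ) < i then w ⟨j, by have := j.isLt; omega⟩
    else if (j : ℕ) = i then ℓ
    else w ⟨(j : ℕ) + 1, by have := j.isLt; omega⟩)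

/-- The bar differential
`d(a₁⊗⋯⊗a_{n+1}) = Σ_{i=1}^{n} (−1)^i a₁⊗⋯⊗a_i a_{i+1}⊗⋯⊗a_{n+1}`. -/
noncomputable def barD (k : Type*) [Field k] (n : ℕ) :
    BarChain k (n + 1) →ₗ[k] BarChain k n where
  toFun c v := ∑ w : Fin (n + 1) → BLetter,
    (∑ i ∈ Finset.range n, ((-1 : k) ^ (i + 1)) *
      (if h : i + 1 < n + 1 then
        (if wordAdm (n + 1) w ∧ mergeWord w i h = some v then 1 else 0) else 0)) * c w
  map_add' a b := by
    funext t
    simp [Pi.add_apply, mul_add, Finset.sum_add_distrib]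
  map_smul' r c := by
    funext t
    simp only [Pi.smul_apply, smul_eq_mul, RingHom.id_apply, Finset.mul_sum]
    exact Finset.sum_congr rfl (fun s _ => by ring)

/-- `c` is supported on admissible words of internal degree `m`. -/
def barSupp (k : Type*) [Field k] (n m : ℕ) (c : BarChain k n) : Prop :=
  ∀ w : Fin n → BLetter, ¬(wordAdm n w ∧ wordDeg w = m) → c w = 0

/-- The chain `η ⊗ ξ ⊗ θ`. -/
def genEtaXiTheta (k : Type*) [Field k] : BarChain k 3 := fun w =>
  if w = ![BLetter.et, BLetter.xi, BLetter.th] then 1 else 0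

/-- The cycle `η ⊗ θ ⊗ ξ_L + ξ_L ⊗ η ⊗ θ`. -/
def sigmaChain (k : Type*) [Field k] : BarChain k 3 := fun w =>
  (if w = ![BLetter.et, BLetter.th, BLetter.xiL] then 1 else 0) +
  (if w = ![BLetter.xiL, BLetter.et, BLetter.th] then 1 else 0)

/-- The chain `η ⊗ θ ⊗ η ⊗ θ`. -/
def etteChain (k : Type*) [Field k] : BarChain k 4 := fun w =>
  if w = ![BLetter.et, BLetter.th, BLetter.et, BLetter.th] then 1 else 0

open BLetter

def barCoeff (k : Type*) [Field k] (n : ℕ) (w : Fin (n + 1) → BLetter) (v : Fin n → BLetter) :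
    k :=
  ∑ i ∈ Finset.range n, (-1 : k) ^ (i + 1) *
    if h : i + 1 < n + 1 then
      (if wordAdm (n + 1) w ∧ mergeWord w i h = some v then 1 else 0) else 0

section BarCoeff

variable (k : Type*) [Field k] {n : ℕ}

lemma barD_apply (c : BarChain k (n + 1)) (v : Fin n → BLetter) :
    barD k n c v = ∑ w, barCoeff k n w v * c w := rfl

lemma barD_apply_of_barCoeff_eq_zero (c : BarChain k (n + 1)) (v : Fin n → BLetter)
    (w₀ : Fin (n + 1) → BLetter) (h : ∀ w ≠ w₀, barCoeff k n w v = 0) :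
    barD k n c v = barCoeff k n w₀ v * c w₀ := by
  rw [barD_apply, Finset.sum_eq_single w₀ (fun w _ hw => by rw [h w hw, zero_mul])
    (fun hw => absurd (Finset.mem_univ w₀) hw)]

lemma barD_single (w₀ : Fin (n + 1) → BLetter) :
    barD k n (fun w => if w = w₀ then 1 else 0) = barCoeff k n w₀ := by
  funext v
  rw [barD_apply, Finset.sum_eq_single w₀ (fun w _ hw => by rw [if_neg hw, mul_zero])
    (fun hw => absurd (Finset.mem_univ w₀) hw), if_pos rfl, mul_one]

lemma barCoeff_eq_zero {w : Fin (n + 1) → BLetter} {v : Fin n → BLetter}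
    (h : ∀ i (hi : i + 1 < n + 1), mergeWord w i hi ≠ some v) : barCoeff k n w v = 0 :=
  Finset.sum_eq_zero fun i _ => by split_ifs <;> simp_all

end BarCoeff

set_option maxRecDepth 10000 in
lemma eq_etThEtTh_of_mergeWord_eq_some :
    ∀ v ∈ [![et, xi, th], ![et, th, xiL]], ∀ (w : Fin 4 → BLetter) (i : Fin 3),
      mergeWord w i (by omega) = some v → w = ![et, th, et, th] := by
  decide

lemma barCoeff_etThEtTh (k : Type*) [Field k] (v : Fin 3 → BLetter) :
    barCoeff k 3 ![et, th, et, th] v =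
      (if v = ![et, xi, th] then 1 else 0) - (if v = ![et, th, xiL] then 1 else 0)
        - (if v = ![xiL, et, th] then 1 else 0) := by
  have merge₀ : mergeWord ![et, th, et, th] 0 (by omega) = some ![xiL, et, th] := by
    decide
  have merge₁ : mergeWord ![et, th, et, th] 1 (by omega) = some ![et, xi, th] := by
    decide
  have merge₂ : mergeWord ![et, th, et, th] 2 (by omega) = some ![et, th, xiL] := by
    decide
  have adm : wordAdm 4 ![et, th, et, th] := by decide
  simp only [barCoeff, Finset.sum_range_succ, Finset.sum_range_zero, merge₀, merge₁, merge₂,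
    adm, true_and, Option.some.injEq, eq_comm (b := v)]
  norm_num
  split_ifs <;> simp_all

lemma genEtaXiTheta_barSupp (k : Type*) [Field k] : barSupp k 3 2 (genEtaXiTheta k) := by
  intro w hw
  rw [genEtaXiTheta, if_neg]
  rintro rfl
  exact hw (by decide)

lemma barD_genEtaXiTheta (k : Type*) [Field k] : barD k 2 (genEtaXiTheta k) = 0 := by
  unfold genEtaXiTheta
  rw [barD_single]
  funext v
  refine barCoeff_eq_zero k fun i hi => ?_
  have : i < 2 := by omega
  interval_cases i <;> simp [mergeWord, mulLetter]

lemma barD_etteChain (k : Type*) [Field k] :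
    barD k 3 (etteChain k) = genEtaXiTheta k - sigmaChain k := by
  unfold etteChain
  rw [barD_single]
  funext v
  rw [barCoeff_etThEtTh, Pi.sub_apply, genEtaXiTheta, sigmaChain]
  ring

lemma genEtaXiTheta_not_boundary (k : Type*) [Field k] :
    ¬ ∃ b : BarChain k 4, barD k 3 b = genEtaXiTheta k := by
  rintro ⟨b, hb⟩
  have coeff_eq (v : Fin 3 → BLetter) (hv : v ∈ [![et, xi, th], ![et, th, xiL]]) :
      barD k 3 b v = barCoeff k 3 ![et, th, et, th] v * b ![et, th, et, th] :=
    barD_apply_of_barCoeff_eq_zero k b v _ fun w hw =>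
      barCoeff_eq_zero k fun i hi hm =>
        hw (eq_etThEtTh_of_mergeWord_eq_some v hv w ⟨i, by omega⟩ hm)
  have at_etXiTh : (1 : k) = b ![et, th, et, th] := by
    simpa [barCoeff_etThEtTh, genEtaXiTheta, hb] using coeff_eq ![et, xi, th] (by simp)
  have at_etThXiL : (0 : k) = -b ![et, th, et, th] := by
    simpa [barCoeff_etThEtTh, genEtaXiTheta, hb] using coeff_eq ![et, th, xiL] (by simp)
  exact one_ne_zero (by linear_combination at_etXiTh + at_etThXiL)

/-- In the bar-type complex `C_•(L)` for `B = Ext*(𝒪 ⊕ L, 𝒪 ⊕ L)`, the element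
`η ⊗ ξ ⊗ θ` is a cycle in internal degree 2 and homological degree 3 which is
not a boundary, and it differs from the cycle `η ⊗ θ ⊗ ξ_L + ξ_L ⊗ η ⊗ θ` by
the boundary of `η ⊗ θ ⊗ η ⊗ θ`. -/
theorem stmt_13 (k : Type*) [Field k] :
    barSupp k 3 2 (genEtaXiTheta k) ∧
    barD k 2 (genEtaXiTheta k) = 0 ∧
    (¬ ∃ b : BarChain k 4, barD k 3 b = genEtaXiTheta k) ∧
    genEtaXiTheta k - sigmaChain k = barD k 3 (etteChain k) :=
  ⟨genEtaXiTheta_barSupp k, barD_genEtaXiTheta k, genEtaXiTheta_not_boundary k,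
    (barD_etteChain k).symm⟩
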